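/- Let O ⊆ P contain A with O ∩ B = ∅, and let J be an order ideal of P with set D = {i : (i,−i) ∈ J}. Then for i ∈ D one has w^{O,J}(i) = −i; moreover, for any i₁ < i < i₂ with i₁, i₂ ∈ D ∪ {0, n+1}, one has i₁ < |w^{O,J}(i)| < i₂. -/

import Mathlib

open scoped Classical Pointwise

noncomputable section

/-- Position of `j` in the total order `1 ⋖ … ⋖ n ⋖ -n ⋖ … ⋖ -1` on `N`. -/
def ordKey (n : ℕ) (j : ℤ) : ℤ := if 0 < j then j else 2 * n + 1 + j

/-- Membership in the type C Gelfand–Tsetlin poset `P`: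
pairs `(i,j)` with `1 ≤ i ≤ n` and `i ≤ |j| ≤ n`. -/
def inP (n : ℕ) (p : ℤ × ℤ) : Prop :=
  1 ≤ p.1 ∧ p.1 ≤ (n : ℤ) ∧ p.1 ≤ |p.2| ∧ |p.2| ≤ (n : ℤ)

/-- The order relation `⪯` of `P`: `(i₁,j₁) ⪯ (i₂,j₂)` iff `i₁ ≤ i₂` and `j₁ ⩽̇ j₂`. -/
def ple (n : ℕ) (p q : ℤ × ℤ) : Prop :=
  p.1 ≤ q.1 ∧ ordKey n p.2 ≤ ordKey n q.2

/-- Strict version of `⪯`. -/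
def plt (n : ℕ) (p q : ℤ × ℤ) : Prop := ple n p q ∧ p ≠ q

/-- The elements of `N = {1,…,n,-n,…,-1}` listed in increasing `⋖` order. -/
def jList (n : ℕ) : List ℤ :=
  ((List.range n).map fun t => (t : ℤ) + 1) ++ ((List.range n).map fun t => (t : ℤ) - n)

/-- All pairs `(i,j)` with `i ∈ [1,n]`, `j ∈ N`, ordered first by `i` increasing,
then by `j` increasing with respect to `⋖`. -/
def posList (n : ℕ) : List (ℤ × ℤ) :=
  (List.range n).flatMap fun a => (jList n).map fun j => ((a : ℤ) + 1, j)

/-- `P` as a finite set. -/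
def Pfin (n : ℕ) : Finset (ℤ × ℤ) := (posList n).toFinset.filter (inP n)

/-- `N` as a finite set. -/
def Nfin (n : ℕ) : Finset ℤ := (jList n).toFinset

/-- The diagonal `A = {(i,i) : 1 ≤ i ≤ n}`. -/
def Aset (n : ℕ) : Finset (ℤ × ℤ) :=
  (Finset.range n).image fun t => (((t : ℤ) + 1, (t : ℤ) + 1) : ℤ × ℤ)

/-- Order ideals (downward closed subsets) of `P`. -/
def IsIdeal (n : ℕ) (J : Finset (ℤ × ℤ)) : Prop :=
  (∀ p ∈ J, inP n p) ∧ ∀ p ∈ J, ∀ q ∈ Pfin n, ple n q p → q ∈ J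

/-- The set of `≺`-maximal elements of `J`. -/
def maxPrec (n : ℕ) (J : Finset (ℤ × ℤ)) : Finset (ℤ × ℤ) :=
  J.filter fun p => ∀ q ∈ J, ple n p q → q = p

/-- `M_O(J) = (J ∩ O) ∪ max_≺(J)`. -/
def MO (n : ℕ) (O J : Finset (ℤ × ℤ)) : Finset (ℤ × ℤ) := (J ∩ O) ∪ maxPrec n J

/-- The permutation `w_M`: the product of the transpositions `s_{i,j}` over `(i,j) ∈ M`,
ordered first by `i` increasing and then by `j` increasing with respect to `⋖`
(the leftmost factor acts last). -/
def wPerm (n : ℕ) (M : Finset (ℤ × ℤ)) : Equiv.Perm ℤ :=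
  (((posList n).filter fun p => decide (p ∈ M)).map fun p => Equiv.swap p.1 p.2).prod

/-- `w^{O,J} = w_O⁻¹ ⬝ w_{M_O(J)}`. -/
def wOJ (n : ℕ) (O J : Finset (ℤ × ℤ)) : Equiv.Perm ℤ :=
  (wPerm n O)⁻¹ * wPerm n (MO n O J)

/-- The principal order ideal `⟨i,j⟩` of `(i,j) ∈ P`. -/
def princ (n : ℕ) (p : ℤ × ℤ) : Finset (ℤ × ℤ) := (Pfin n).filter fun q => ple n q p

/-- `r(i,j) = w^{O,⟨i,j⟩}(i)`. -/
def rMap (n : ℕ) (O : Finset (ℤ × ℤ)) (i j : ℤ) : ℤ := wOJ n O (princ n (i, j)) i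

/-- Inverse of `ordKey` (on the relevant range `[1, 2n]`). -/
def invOrdKey (n : ℕ) (t : ℤ) : ℤ := if t ≤ (n : ℤ) then t else t - (2 * n + 1)

/-- The `⋖`-maximal `j'` with `j' ⋖ j` and `(i,j') ∈ O`. -/
def prevO (n : ℕ) (O : Finset (ℤ × ℤ)) (i j : ℤ) : ℤ :=
  invOrdKey n (WithBot.unbotD 0 (((Nfin n).filter fun j' => (i, j') ∈ O ∧ ordKey n j' < ordKey n j).image
    (ordKey n)).max)

/-- The pipe-dream linear transform `ξ` of `ℝ^P` (coordinates outside `P` are untouched):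
`ξ(ε_{i,i}) = ε_{i,r(i,i)}` and `ξ(ε_{i,j}) = ε_{i,r(i,j)} - ε_{i,r(i,j')}` for `j ≠ i`,
where `j'` is `⋖`-maximal with `j' ⋖ j` and `(i,j') ∈ O`. -/
def xiMap (n : ℕ) (O : Finset (ℤ × ℤ)) (x : (ℤ × ℤ) → ℝ) : (ℤ × ℤ) → ℝ := fun q =>
  if inP n q then
    (∑ j ∈ (Nfin n).filter (fun j => inP n (q.1, j) ∧ rMap n O q.1 j = q.2), x (q.1, j))
    - (∑ j ∈ (Nfin n).filter
        (fun j => inP n (q.1, j) ∧ j ≠ q.1 ∧ rMap n O q.1 (prevO n O q.1 j) = q.2), x (q.1, j))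
  else x q

/-- Indicator vector `1_{M_O(J)} ∈ ℝ^P`. -/
def indicMO (n : ℕ) (O J : Finset (ℤ × ℤ)) : (ℤ × ℤ) → ℝ := fun p =>
  if p ∈ MO n O J then 1 else 0

/-- The fundamental marked chain-order polytope `𝒬_O(ω_k)`:
the convex hull of the vectors `1_{M_O(J)}`, `J ∈ 𝒥ₖ`. -/
def QOfund (n : ℕ) (O : Finset (ℤ × ℤ)) (k : ℕ) : Set ((ℤ × ℤ) → ℝ) :=
  convexHull ℝ {x | ∃ J : Finset (ℤ × ℤ),
    IsIdeal n J ∧ (J ∩ Aset n).card = k ∧ x = indicMO n O J}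

/-- The marked chain-order polytope `𝒬_O(λ)` for `λ = a₁ω₁ + … + a_nω_n`:
the Minkowski sum `a₁𝒬_O(ω₁) + … + a_n𝒬_O(ω_n)`. -/
def QO (n : ℕ) (O : Finset (ℤ × ℤ)) (a : ℕ → ℕ) : Set ((ℤ × ℤ) → ℝ) :=
  ∑ k ∈ Finset.Icc 1 n, a k • QOfund n O k

/-- Integrality (lattice point) predicate. -/
def IsLat (x : (ℤ × ℤ) → ℝ) : Prop := ∀ p, ∃ m : ℤ, x p = m

/-- Type B: `λ(i) = a_i + … + a_{n-1} + a_n/2`. -/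
def lamB (n : ℕ) (a : ℕ → ℕ) (i : ℤ) : ℝ :=
  (∑ t ∈ Finset.Icc i.toNat (n - 1), (a t : ℝ)) + (a n : ℝ) / 2

/-- The type B poset polytope `𝒬^B_O(λ)` (H-description with factor `1/2`
on the coordinates in `B = {(i,-i)}`). -/
def QB (n : ℕ) (O : Finset (ℤ × ℤ)) (lam : ℤ → ℝ) : Set ((ℤ × ℤ) → ℝ) :=
  {x | (∀ i : ℤ, 1 ≤ i → i ≤ (n : ℤ) → x (i, i) = lam i) ∧
    (∀ p, inP n p → 0 ≤ x p) ∧ (∀ p, ¬ inP n p → x p = 0) ∧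
    ∀ (pq rs : ℤ × ℤ) (c : List (ℤ × ℤ)), pq ∈ O → inP n rs →
      (∀ q ∈ c, inP n q ∧ q ∉ O) →
      List.Chain' (plt n) (pq :: (c ++ [rs])) →
      (c.map x).sum ≤ x pq - (if rs.2 = -rs.1 then (1 : ℝ) / 2 else 1) * x rs}

/-- The point `x^{J,D}`. -/
def xJD (n : ℕ) (O J : Finset (ℤ × ℤ)) (D : Finset ℤ) : (ℤ × ℤ) → ℝ := fun p =>
  if p ∈ MO n O J then (if p.2 = -p.1 ∧ p.1 ∉ D then 2 else 1) else 0

/-- The projection `π : ℝ^P → ℝ^{P∖A}` (realized by zeroing the `A`-coordinates). -/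
def piA (x : (ℤ × ℤ) → ℝ) : (ℤ × ℤ) → ℝ := fun p => if p.2 = p.1 then 0 else x p

/-- The transformed type B poset polytope `Π^B_O(λ) = πξ(𝒬^B_O(λ))`. -/
def PiB (n : ℕ) (O : Finset (ℤ × ℤ)) (a : ℕ → ℕ) : Set ((ℤ × ℤ) → ℝ) :=
  (fun x => piA (xiMap n O x)) '' QB n O (lamB n a)

/-- The point `y^D ∈ ℝ^{P∖A}`. -/
def yD (D : Finset ℤ) : (ℤ × ℤ) → ℝ := fun p => if p.2 = -p.1 ∧ p.1 ∈ D then 1 else 0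

/-
`w_X` is the product over the rows `m = 1, …, n` of the cycles `m ↦ jᵣ ↦ ⋯ ↦ j₁ ↦ m` through
the entries `j₁ ⋖ ⋯ ⋖ jᵣ` of row `m` of `X`. Since `J` is an ideal, row `m` of `O` and row `m`
of `M_O(J)` begin with the same entries, those of `J ∩ O`. Peeling off one row at a time writes
`w^{O,J}` as a product of conjugates `ρ gₘ ρ⁻¹`, where `gₘ` moves only `m` and the row-`m`
entries of `O ∖ J` and of `M_O(J) ∖ O`, and `ρ` is the inverse of the product of the `O`-rows
`m + 1, …, n`. For `(i, -i) ∈ J` and `m < i` these entries lie strictly between `-i` and `0`;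
`ρ` fixes `m` and does not increase the absolute value of negative numbers, so the conjugate
moves only points of `(-i, i)`. For `m = i` the conjugate is the transposition of `i` and `-i`,
because `(i, -i)` is the last entry of row `i` of `M_O(J)` and is not in `O`, while the rows
`i + 1, …, n` fix `[-i, i]` pointwise. Hence `w^{O,J}` exchanges `i` and `-i` and preserves
both `(-i, i)` and `[-i, i]`.
-/

open Equiv MulAction

namespace GelfandTsetlinC

section Lists

variable {α : Type*}

theorem list_prod_apply_eq_self {l : List (Perm α)} {x : α} (h : ∀ g ∈ l, g x = x) :
    l.prod x = x :=
  mem_stabilizer_iff.1 <| Subgroup.list_prod_mem _ fun g hg => mem_stabilizer_iff.2 (h g hg)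

theorem filter_eq_append_of_pairwise {r : α → α → Prop} {p q : α → Bool} {l : List α}
    (hl : l.Pairwise r) (hq : ∀ a ∈ l, ∀ b ∈ l, r a b → p a → p b → q b → q a) :
    l.filter p = l.filter (fun a => p a && q a) ++ l.filter (fun a => p a && !q a) := by
  induction l with
  | nil => rfl
  | cons a l ih =>
    obtain ⟨hal, hl⟩ := List.pairwise_cons.1 hl
    have ih := ih hl fun x hx y hy => hq x (.tail _ hx) y (.tail _ hy)
    by_cases hpa : p a
    · by_cases hqa : q a
      · simp [hpa, hqa, ih]
      · have hnil : l.filter (fun a => p a && q a) = [] :=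
          List.filter_eq_nil_iff.2 fun b hb hpq => hqa <| by
            rw [Bool.and_eq_true] at hpq
            exact hq a (.head _) b (.tail _ hb) (hal b hb) hpa hpq.1 hpq.2
        simp [hpa, hqa, ih, hnil]
    · simp [hpa, ih]

variable [DecidableEq α]

/-- For distinct `b₁, …, bᵣ ≠ a`, `swapProd a [b₁, …, bᵣ]` is the cycle `a ↦ bᵣ ↦ ⋯ ↦ b₁ ↦ a`. -/
def swapProd (a : α) (l : List α) : Perm α := (l.map (swap a)).prod

theorem swapProd_append (a : α) (l l' : List α) :
    swapProd a (l ++ l') = swapProd a l * swapProd a l' := by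
  simp [swapProd]

theorem swapProd_filter_ne (a : α) (l : List α) :
    swapProd a (l.filter (· ≠ a)) = swapProd a l := by
  induction l with
  | nil => rfl
  | cons b l ih =>
    by_cases hb : b = a <;> simpa [swapProd, hb, ← Perm.one_def] using ih

theorem swapProd_apply_of_not_mem {a x : α} {l : List α} (hxa : x ≠ a) (hxl : x ∉ l) :
    swapProd a l x = x :=
  list_prod_apply_eq_self <| by
    simp only [List.mem_map]
    rintro _ ⟨b, hb, rfl⟩
    exact swap_apply_of_ne_of_ne hxa fun h => hxl (h ▸ hb)

theorem swapProd_inv_apply_of_not_mem {a x : α} {l : List α} (hxa : x ≠ a) (hxl : x ∉ l) :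
    (swapProd a l)⁻¹ x = x := by
  rw [Perm.inv_eq_iff_eq, swapProd_apply_of_not_mem hxa hxl]

section Sorted

variable {r : α → α → Prop} {a : α} {l : List α} (hl : l.Pairwise r) (hnd : l.Nodup) (ha : a ∉ l)
include hl hnd ha

theorem swapProd_apply_of_mem {y : α} (hy : y ∈ l) :
    swapProd a l y = a ∨ (swapProd a l y ∈ l ∧ r (swapProd a l y) y) := by
  induction l with
  | nil => cases hy
  | cons b l ih =>
    obtain ⟨hbl, hl⟩ := List.pairwise_cons.1 hl
    obtain ⟨hbl', hnd⟩ := List.nodup_cons.1 hnd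
    have hab : a ≠ b := fun h => ha (h ▸ .head _)
    have ha : a ∉ l := fun h => ha (.tail _ h)
    rw [swapProd, List.map_cons, List.prod_cons, ← swapProd, Perm.mul_apply]
    rcases List.mem_cons.1 hy with rfl | hy
    · rw [swapProd_apply_of_not_mem (Ne.symm hab) hbl', swap_apply_right]
      exact .inl rfl
    · rcases ih hl hnd ha hy with h | ⟨hmem, hr⟩
      · rw [h, swap_apply_left]
        exact .inr ⟨.head _, hbl y hy⟩
      · rw [swap_apply_of_ne_of_ne (ne_of_mem_of_not_mem hmem ha) (ne_of_mem_of_not_mem hmem hbl')]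
        exact .inr ⟨.tail _ hmem, hr⟩

theorem swapProd_inv_apply_of_mem {j : α} (hj : j ∈ l) :
    (swapProd a l)⁻¹ j = a ∨ ((swapProd a l)⁻¹ j ∈ l ∧ r j ((swapProd a l)⁻¹ j)) := by
  set y := (swapProd a l)⁻¹ j
  have hy : swapProd a l y = j := Perm.eq_inv_iff_eq.1 rfl
  by_cases hyl : y ∈ l
  · rcases swapProd_apply_of_mem hl hnd ha hyl with h | ⟨-, hr⟩
    · exact absurd (h ▸ hy ▸ hj) ha
    · exact .inr ⟨hyl, hy ▸ hr⟩
  · by_contra hya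
    rw [swapProd_apply_of_not_mem (fun h => hya (.inl h)) hyl] at hy
    exact hyl (hy ▸ hj)

end Sorted

end Lists

section Rows

variable {n : ℕ}

theorem lt_of_ordKey_lt {j y : ℤ} (hj : j < 0) (hjn : -n ≤ j) (hy : 1 ≤ |y|) (hyn : |y| ≤ n)
    (h : ordKey n j < ordKey n y) : j < y ∧ y < 0 := by
  unfold ordKey at h
  rcases abs_cases y with ⟨hy', _⟩ | ⟨hy', _⟩ <;> split_ifs at h <;> omega

theorem ple_neg_of_inP {m z : ℤ} (h : inP n (m, z)) : ple n (m, z) (m, -m) := by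
  obtain ⟨h1, -, h3, h4⟩ := h
  refine ⟨le_rfl, ?_⟩
  unfold ordKey
  rcases abs_cases z with ⟨hz, _⟩ | ⟨hz, _⟩ <;> dsimp only at * <;> split_ifs <;> omega

theorem eq_of_ple_neg {m : ℤ} {q : ℤ × ℤ} (hm : 0 < m) (hq : inP n q) (h : ple n (m, -m) q) :
    q = (m, -m) := by
  obtain ⟨i, z⟩ := q
  obtain ⟨h1, -, h3, h4⟩ := hq
  obtain ⟨hmi, hkey⟩ := h
  unfold ordKey at hkey
  dsimp only at *
  have hz : z = -m := by
    rcases abs_cases z with ⟨hz, _⟩ | ⟨hz, _⟩ <;> split_ifs at hkey <;> omega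
  subst hz
  rw [abs_neg, abs_of_pos hm] at h3
  rw [le_antisymm h3 hmi]

/-- In `jList` and `posList` the coercion of `List.range n` to `List ℤ` is elaborated as a monadic
bind. -/
theorem coe_range_eq_map (n : ℕ) : (List.range n : List ℤ) = (List.range n).map Nat.cast := by
  simp [← List.map_eq_flatMap]

theorem jList_pairwise (n : ℕ) : (jList n).Pairwise fun a b => ordKey n a < ordKey n b := by
  simp only [jList, coe_range_eq_map, List.map_map, List.pairwise_append, List.pairwise_map,
    List.mem_map, List.mem_range, Function.comp_apply]
  refine ⟨List.pairwise_lt_range.imp ?_, List.pairwise_lt_range.imp_of_mem ?_, ?_⟩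
  · intro a b hab
    unfold ordKey
    split_ifs <;> omega
  · intro a b ha hb hab
    rw [List.mem_range] at ha hb
    unfold ordKey
    split_ifs <;> omega
  · rintro _ ⟨a, ha, rfl⟩ _ ⟨b, hb, rfl⟩
    unfold ordKey
    split_ifs <;> omega

theorem jList_nodup (n : ℕ) : (jList n).Nodup :=
  (jList_pairwise n).imp fun h he => h.ne (congrArg _ he)

theorem neg_mem_jList {m : ℤ} (hm : 1 ≤ m) (hmn : m ≤ n) : -m ∈ jList n := by
  simp only [jList, coe_range_eq_map, List.map_map, List.mem_append, List.mem_map, List.mem_range,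
    Function.comp_apply]
  exact .inr ⟨(n - m).toNat, by omega, by omega⟩

def rowList (n : ℕ) (X : Finset (ℤ × ℤ)) (m : ℤ) : List ℤ :=
  (jList n).filter fun j => decide (j ≠ m ∧ (m, j) ∈ X)

def rowPerm (n : ℕ) (X : Finset (ℤ × ℤ)) (m : ℤ) : Perm ℤ := swapProd m (rowList n X m)

def rowsPerm (n : ℕ) (X : Finset (ℤ × ℤ)) (k m : ℕ) : Perm ℤ :=
  ((List.range' k m).map fun r : ℕ => rowPerm n X r).prod

variable {X : Finset (ℤ × ℤ)}

theorem mem_rowList {m j : ℤ} : j ∈ rowList n X m ↔ j ∈ jList n ∧ j ≠ m ∧ (m, j) ∈ X := by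
  simp [rowList]

theorem rowList_pairwise (n : ℕ) (X : Finset (ℤ × ℤ)) (m : ℤ) :
    (rowList n X m).Pairwise fun a b => ordKey n a < ordKey n b :=
  (jList_pairwise n).filter _

theorem rowList_nodup (n : ℕ) (X : Finset (ℤ × ℤ)) (m : ℤ) : (rowList n X m).Nodup :=
  (jList_nodup n).filter _

theorem self_not_mem_rowList (n : ℕ) (X : Finset (ℤ × ℤ)) (m : ℤ) : m ∉ rowList n X m :=
  fun h => (mem_rowList.1 h).2.1 rfl

theorem rowPerm_eq_swapProd (m : ℤ) :
    rowPerm n X m = swapProd m ((jList n).filter fun j => decide ((m, j) ∈ X)) := by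
  rw [rowPerm, rowList, ← swapProd_filter_ne m ((jList n).filter fun j => decide ((m, j) ∈ X)),
    List.filter_filter]
  congr 2
  ext j
  simp

theorem wPerm_eq_rowsPerm (n : ℕ) (X : Finset (ℤ × ℤ)) : wPerm n X = rowsPerm n X 1 n := by
  rw [wPerm, posList, coe_range_eq_map, List.flatMap_map, List.filter_flatMap, List.map_flatMap,
    List.flatMap_def, List.prod_flatten, List.map_map, rowsPerm, List.range'_eq_map_range,
    List.map_map]
  congr 1
  refine List.map_congr_left fun a _ => ?_
  rw [Function.comp_apply, Function.comp_apply, rowPerm_eq_swapProd, List.filter_map, List.map_map]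
  push_cast
  rw [add_comm (1 : ℤ)]
  rfl

theorem rowsPerm_succ (k m : ℕ) :
    rowsPerm n X k (m + 1) = rowPerm n X k * rowsPerm n X (k + 1) m := by
  simp [rowsPerm, List.range'_succ]

section InP

variable (hX : ∀ p ∈ X, inP n p)
include hX

theorem rowPerm_apply_of_abs_lt {r x : ℤ} (hx : |x| < r) : rowPerm n X r x = x :=
  swapProd_apply_of_not_mem (by rintro rfl; exact (le_abs_self x).not_gt hx)
    fun h => (hX _ (mem_rowList.1 h).2.2).2.2.1.not_gt hx

theorem rowsPerm_apply_of_abs_lt {k : ℕ} (m : ℕ) {x : ℤ} (hx : |x| < k) :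
    rowsPerm n X k m x = x :=
  list_prod_apply_eq_self <| by
    simp only [List.mem_map, List.mem_range'_1]
    rintro _ ⟨r, hr, rfl⟩
    exact rowPerm_apply_of_abs_lt hX (by omega)

theorem rowsPerm_inv_apply_of_abs_lt {k : ℕ} (m : ℕ) {x : ℤ} (hx : |x| < k) :
    (rowsPerm n X k m)⁻¹ x = x := by
  rw [Perm.inv_eq_iff_eq, rowsPerm_apply_of_abs_lt hX m hx]

theorem wPerm_apply_of_lt_abs {x : ℤ} (hx : n < |x|) : wPerm n X x = x :=
  list_prod_apply_eq_self <| by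
    simp only [List.mem_map, List.mem_filter, decide_eq_true_eq]
    rintro _ ⟨p, ⟨-, hp⟩, rfl⟩
    obtain ⟨h1, h2, h3, h4⟩ := hX p hp
    exact swap_apply_of_ne_of_ne (by rintro rfl; rw [abs_of_pos (by omega)] at hx; omega)
      (by rintro rfl; omega)

/-- A row cycle sends a negative entry `j` to the row index or to a later, hence negative and
smaller in absolute value, entry of the row. -/
theorem abs_rowsPerm_inv_apply_le (k m : ℕ) {j : ℤ} (hj : j < 0) :
    |(rowsPerm n X k m)⁻¹ j| ≤ |j| := by
  induction m generalizing k j with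
  | zero => simp [rowsPerm]
  | succ m ih =>
    rw [rowsPerm_succ, mul_inv_rev, Perm.mul_apply, rowPerm]
    by_cases hjr : j ∈ rowList n X k
    · obtain ⟨hk1, -, hkj, hjn⟩ := hX _ (mem_rowList.1 hjr).2.2
      dsimp only at hk1 hkj hjn
      rcases swapProd_inv_apply_of_mem (rowList_pairwise n X k) (rowList_nodup n X k)
        (self_not_mem_rowList n X k) hjr with h | ⟨hy, hlt⟩
      · rw [h, rowsPerm_inv_apply_of_abs_lt hX m (by rw [Nat.abs_cast]; omega)]
        rwa [abs_of_pos (by omega)]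
      · obtain ⟨-, -, hky, hyn⟩ := hX _ (mem_rowList.1 hy).2.2
        dsimp only at hky hyn
        obtain ⟨hjy, hy0⟩ :=
          lt_of_ordKey_lt hj (by rw [abs_of_neg hj] at hjn; omega) (by omega) hyn hlt
        refine (ih _ hy0).trans ?_
        rw [abs_of_neg hy0, abs_of_neg hj]
        omega
    · rw [swapProd_inv_apply_of_not_mem (by omega) hjr]
      exact ih _ hj

end InP

theorem rowList_eq_append {Y : Finset (ℤ × ℤ)} {m : ℤ}
    (hY : ∀ a b, (m, a) ∈ X → (m, b) ∈ X → ordKey n a < ordKey n b → (m, b) ∈ Y → (m, a) ∈ Y) :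
    rowList n X m = rowList n (X ∩ Y) m ++ rowList n (X \ Y) m := by
  rw [rowList, filter_eq_append_of_pairwise (q := fun j => decide ((m, j) ∈ Y)) (jList_pairwise n)]
  · congr 1 <;> apply List.filter_congr <;> intro j _ <;> simp [Bool.and_assoc]
  · intro a _ b _ hab ha hb hbY
    simp only [decide_eq_true_eq] at ha hb hbY ⊢
    exact hY a b ha.2 hb.2 hab hbY

end Rows

section Ideal

variable {n : ℕ} {O J : Finset (ℤ × ℤ)}

theorem inP_of_subset_Pfin (hO : O ⊆ Pfin n) : ∀ p ∈ O, inP n p :=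
  fun _ hp => (Finset.mem_filter.1 (hO hp)).2

theorem mem_of_mem_MO {p : ℤ × ℤ} (hp : p ∈ MO n O J) : p ∈ J :=
  (Finset.mem_union.1 hp).elim (fun h => (Finset.mem_inter.1 h).1)
    fun h => (Finset.mem_filter.1 h).1

theorem inP_of_mem_MO (hJ : IsIdeal n J) : ∀ p ∈ MO n O J, inP n p :=
  fun _ hp => hJ.1 _ (mem_of_mem_MO hp)

theorem mem_maxPrec_of_mem_MO {p : ℤ × ℤ} (hp : p ∈ MO n O J) (hpJO : p ∉ J ∩ O) :
    p ∈ maxPrec n J :=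
  (Finset.mem_union.1 hp).resolve_left hpJO

theorem neg_mem_maxPrec (hJ : IsIdeal n J) {m : ℤ} (hm : (m, -m) ∈ J) : (m, -m) ∈ maxPrec n J :=
  Finset.mem_filter.2 ⟨hm, fun _ hq hle => eq_of_ple_neg (hJ.1 _ hm).1 (hJ.1 _ hq) hle⟩

def rowCorrection (n : ℕ) (O J : Finset (ℤ × ℤ)) (m : ℤ) : Perm ℤ :=
  (rowPerm n O m)⁻¹ * rowPerm n (MO n O J) m

variable (hO : O ⊆ Pfin n) (hJ : IsIdeal n J)
include hO hJ

/-- Within a row, `J` is an initial segment, so row `m` of `O` is its part in `J` followed by its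
part outside `J`, and row `m` of `M_O(J)` is its part in `J ∩ O` followed by maximal elements
of `J` outside `O`. -/
theorem rowCorrection_eq (m : ℤ) :
    rowCorrection n O J m =
      (swapProd m (rowList n (O \ J) m))⁻¹ * swapProd m (rowList n (MO n O J \ (J ∩ O)) m) := by
  have hrowO : rowList n O m = rowList n (J ∩ O) m ++ rowList n (O \ J) m := by
    rw [Finset.inter_comm]
    exact rowList_eq_append fun a b ha _ hab hb => hJ.2 _ hb _ (hO ha) ⟨le_rfl, hab.le⟩
  have hrowM : rowList n (MO n O J) m =
      rowList n (J ∩ O) m ++ rowList n (MO n O J \ (J ∩ O)) m := by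
    have hsub : J ∩ O ⊆ MO n O J := Finset.subset_union_left
    nth_rw 1 [← Finset.inter_eq_right.2 hsub]
    refine rowList_eq_append fun a b ha _ hab hb => ?_
    by_contra haJO
    have := (Finset.mem_filter.1 (mem_maxPrec_of_mem_MO ha haJO)).2 _
      (Finset.mem_inter.1 hb).1 ⟨le_rfl, hab.le⟩
    exact hab.ne (congrArg (ordKey n ∘ Prod.snd) this).symm
  rw [rowCorrection, rowPerm, rowPerm, hrowO, hrowM, swapProd_append, swapProd_append]
  group

theorem eq_or_mem_of_rowCorrection_apply_ne {m y : ℤ} (hy : rowCorrection n O J m y ≠ y) :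
    y = m ∨ (m, y) ∈ O \ J ∨ (m, y) ∈ MO n O J \ (J ∩ O) := by
  by_contra! h
  rw [rowCorrection_eq hO hJ, Perm.mul_apply,
    swapProd_apply_of_not_mem h.1 fun hm => h.2.2 (mem_rowList.1 hm).2.2,
    swapProd_inv_apply_of_not_mem h.1 fun hm => h.2.1 (mem_rowList.1 hm).2.2] at hy
  exact hy rfl

theorem neg_lt_and_lt_zero_of_mem_sdiff {m i y : ℤ} (hmi : m < i) (hiJ : (i, -i) ∈ J)
    (hy : (m, y) ∈ O \ J ∨ (m, y) ∈ MO n O J \ (J ∩ O)) : -i < y ∧ y < 0 := by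
  have hkey : ordKey n (-i) < ordKey n y := by
    by_contra! hle
    have hple : ple n (m, y) (i, -i) := ⟨hmi.le, hle⟩
    rcases hy with hy | hy
    · obtain ⟨hyO, hyJ⟩ := Finset.mem_sdiff.1 hy
      exact hyJ (hJ.2 _ hiJ _ (hO hyO) hple)
    · obtain ⟨hyM, hyJO⟩ := Finset.mem_sdiff.1 hy
      have := (Finset.mem_filter.1 (mem_maxPrec_of_mem_MO hyM hyJO)).2 _ hiJ hple
      exact hmi.ne' (congrArg Prod.fst this)
  have hmy : inP n (m, y) := by
    rcases hy with hy | hy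
    · exact inP_of_subset_Pfin hO _ (Finset.mem_sdiff.1 hy).1
    · exact inP_of_mem_MO hJ _ (Finset.mem_sdiff.1 hy).1
  obtain ⟨h1, -, h3, h4⟩ := hmy
  obtain ⟨-, -, -, hi⟩ := hJ.1 _ hiJ
  dsimp only at h1 h3 h4 hi
  rw [abs_neg, abs_of_pos (by omega)] at hi
  exact lt_of_ordKey_lt (by omega) (by omega) (by omega) h4 hkey

/-- If `(m, -m) ∈ J`, then row `m` of `M_O(J)` is row `m` of `O` followed by `-m`. -/
theorem rowCorrection_eq_swap (hB : ∀ p ∈ O, p.2 ≠ -p.1) {m : ℤ} (hm : (m, -m) ∈ J) :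
    rowCorrection n O J m = swap m (-m) := by
  obtain ⟨hm1, hmn, -, -⟩ := hJ.1 _ hm
  dsimp only at hm1 hmn
  have hR : rowList n (O \ J) m = [] := List.filter_eq_nil_iff.2 fun j _ h => by
    simp only [ne_eq, Finset.mem_sdiff, decide_eq_true_eq] at h
    exact h.2.2 (hJ.2 _ hm _ (hO h.2.1) (ple_neg_of_inP (inP_of_subset_Pfin hO _ h.2.1)))
  have hT : rowList n (MO n O J \ (J ∩ O)) m = [-m] := by
    refine ((List.perm_ext_iff_of_nodup (rowList_nodup n _ m) (List.nodup_singleton _)).2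
      fun j => ?_).eq_singleton
    simp only [mem_rowList, List.mem_singleton, Finset.mem_sdiff]
    constructor
    · rintro ⟨-, -, hjM, hjJO⟩
      have := (Finset.mem_filter.1 (mem_maxPrec_of_mem_MO hjM hjJO)).2 _ hm
        (ple_neg_of_inP (inP_of_mem_MO hJ _ hjM))
      exact (congrArg Prod.snd this).symm
    · rintro rfl
      exact ⟨neg_mem_jList hm1 hmn, by omega, Finset.mem_union_right _ (neg_mem_maxPrec hJ hm),
        fun h => hB _ (Finset.mem_inter.1 h).2 rfl⟩
  rw [rowCorrection_eq hO hJ, hR, hT]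
  simp [swapProd]

end Ideal

section Factorization

variable {n : ℕ} {O J : Finset (ℤ × ℤ)}

def wOJFrom (n : ℕ) (O J : Finset (ℤ × ℤ)) (k m : ℕ) : Perm ℤ :=
  (rowsPerm n O k m)⁻¹ * rowsPerm n (MO n O J) k m

def rowFactor (n : ℕ) (O J : Finset (ℤ × ℤ)) (k m : ℕ) : Perm ℤ :=
  (rowsPerm n O (k + 1) m)⁻¹ * rowCorrection n O J k * rowsPerm n O (k + 1) m

theorem wOJ_eq_wOJFrom : wOJ n O J = wOJFrom n O J 1 n := by
  rw [wOJ, wOJFrom, wPerm_eq_rowsPerm, wPerm_eq_rowsPerm]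

theorem wOJFrom_succ (k m : ℕ) :
    wOJFrom n O J k (m + 1) = rowFactor n O J k m * wOJFrom n O J (k + 1) m := by
  simp only [wOJFrom, rowFactor, rowCorrection, rowsPerm_succ]
  group

variable (hO : O ⊆ Pfin n) (hJ : IsIdeal n J)
include hO hJ

theorem wOJFrom_apply_of_abs_lt {k : ℕ} (m : ℕ) {x : ℤ} (hx : |x| < k) :
    wOJFrom n O J k m x = x := by
  rw [wOJFrom, Perm.mul_apply, rowsPerm_apply_of_abs_lt (inP_of_mem_MO hJ) m hx,
    rowsPerm_inv_apply_of_abs_lt (inP_of_subset_Pfin hO) m hx]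

theorem movedBy_rowFactor_subset {k : ℕ} (m : ℕ) {i : ℤ} (hki : k < i) (hiJ : (i, -i) ∈ J) :
    (fixedBy ℤ (rowFactor n O J k m))ᶜ ⊆ Set.Ioo (-i) i := by
  intro x hx
  set ρ := rowsPerm n O (k + 1) m
  obtain ⟨y, rfl⟩ : ∃ y, ρ⁻¹ y = x := ⟨ρ x, by simp⟩
  have hy : rowCorrection n O J k y ≠ y := fun h => hx (by simpa [rowFactor, ρ] using h)
  rw [Set.mem_Ioo, ← abs_lt]
  rcases eq_or_mem_of_rowCorrection_apply_ne hO hJ hy with rfl | hy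
  · rw [rowsPerm_inv_apply_of_abs_lt (inP_of_subset_Pfin hO) m (by rw [Nat.abs_cast]; omega),
      Nat.abs_cast]
    exact hki
  · obtain ⟨hiy, hy0⟩ := neg_lt_and_lt_zero_of_mem_sdiff hO hJ hki hiJ hy
    refine (abs_rowsPerm_inv_apply_le (inP_of_subset_Pfin hO) _ m hy0).trans_lt ?_
    rw [abs_of_neg hy0]
    omega

theorem rowFactor_eq_swap (hB : ∀ p ∈ O, p.2 ≠ -p.1) {k : ℕ} (m : ℕ)
    (hk : ((k : ℤ), -(k : ℤ)) ∈ J) : rowFactor n O J k m = swap (k : ℤ) (-k) := by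
  have hconj := swap_apply_apply (rowsPerm n O (k + 1) m)⁻¹ k (-k)
  rw [inv_inv, rowsPerm_inv_apply_of_abs_lt (inP_of_subset_Pfin hO) m (by rw [Nat.abs_cast]; omega),
    rowsPerm_inv_apply_of_abs_lt (inP_of_subset_Pfin hO) m (by rw [abs_neg, Nat.abs_cast]; omega)]
    at hconj
  rw [rowFactor, rowCorrection_eq_swap hO hJ hB hk]
  exact hconj.symm

theorem wOJFrom_apply_and_mem_fixedBy (hB : ∀ p ∈ O, p.2 ≠ -p.1) (k m : ℕ) {i : ℤ} (hki : k ≤ i)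
    (hik : i < k + m) (hiJ : (i, -i) ∈ J) :
    wOJFrom n O J k m i = -i ∧ Set.Ioo (-i) i ∈ fixedBy (Set ℤ) (wOJFrom n O J k m) ∧
      Set.Icc (-i) i ∈ fixedBy (Set ℤ) (wOJFrom n O J k m) := by
  induction m generalizing k with
  | zero => omega
  | succ m ih =>
    rw [wOJFrom_succ]
    rcases hki.eq_or_lt with rfl | hki
    · have hfix : Set.Icc (-(k : ℤ)) k ⊆ fixedBy ℤ (wOJFrom n O J (k + 1) m) := fun x hx =>
        wOJFrom_apply_of_abs_lt hO hJ m (by rw [Set.mem_Icc, ← abs_le] at hx; push_cast; omega)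
      have hswap : (fixedBy ℤ (swap (k : ℤ) (-k)))ᶜ ⊆ Set.Icc (-(k : ℤ)) k := fun x hx => by
        by_contra h
        rw [Set.mem_Icc] at h
        exact hx (swap_apply_of_ne_of_ne (by omega) (by omega))
      rw [rowFactor_eq_swap hO hJ hB m hiJ]
      refine ⟨?_, fixedBy_mul _ _ _ ⟨?_, set_mem_fixedBy_of_subset_fixedBy
        (Set.Ioo_subset_Icc_self.trans hfix)⟩, fixedBy_mul _ _ _
        ⟨set_mem_fixedBy_of_movedBy_subset hswap, set_mem_fixedBy_of_subset_fixedBy hfix⟩⟩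
      · have hk : wOJFrom n O J (k + 1) m k = k := hfix ⟨by omega, le_rfl⟩
        rw [Perm.mul_apply, hk, swap_apply_left]
      · refine set_mem_fixedBy_of_subset_fixedBy fun x hx => ?_
        rw [Set.mem_Ioo] at hx
        exact swap_apply_of_ne_of_ne (by omega) (by omega)
    · obtain ⟨h₁, h₂, h₃⟩ := ih (k + 1) (by push_cast; omega) (by push_cast; omega)
      have hmoved := movedBy_rowFactor_subset hO hJ m hki hiJ
      refine ⟨?_, fixedBy_mul _ _ _ ⟨set_mem_fixedBy_of_movedBy_subset hmoved, h₂⟩,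
        fixedBy_mul _ _ _ ⟨set_mem_fixedBy_of_movedBy_subset
          (hmoved.trans Set.Ioo_subset_Icc_self), h₃⟩⟩
      rw [Perm.mul_apply, h₁]
      by_contra h
      exact (hmoved h).1.ne rfl

end Factorization

section Bounds

variable {n : ℕ} {O J : Finset (ℤ × ℤ)} (hO : O ⊆ Pfin n) (hB : ∀ p ∈ O, p.2 ≠ -p.1)
  (hJ : IsIdeal n J)
include hO hB hJ

theorem wOJ_apply_and_mem_fixedBy {i : ℤ} (hi : (i, -i) ∈ J) :
    wOJ n O J i = -i ∧ Set.Ioo (-i) i ∈ fixedBy (Set ℤ) (wOJ n O J) ∧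
      Set.Icc (-i) i ∈ fixedBy (Set ℤ) (wOJ n O J) := by
  obtain ⟨h1, h2, -, -⟩ := hJ.1 _ hi
  rw [wOJ_eq_wOJFrom]
  exact wOJFrom_apply_and_mem_fixedBy hO hJ hB 1 n (by simpa using h1)
    (by simp only at h2; omega) hi

theorem Icc_mem_fixedBy_wOJ {i : ℤ} (hi : i = 0 ∨ (i, -i) ∈ J) :
    Set.Icc (-i) i ∈ fixedBy (Set ℤ) (wOJ n O J) := by
  rcases hi with rfl | hi
  · refine set_mem_fixedBy_of_subset_fixedBy fun x hx => ?_
    obtain rfl : x = 0 := by simp only [neg_zero, Set.mem_Icc] at hx; omega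
    rw [mem_fixedBy, Perm.smul_def, wOJ_eq_wOJFrom]
    exact wOJFrom_apply_of_abs_lt hO hJ n (by simp)
  · exact (wOJ_apply_and_mem_fixedBy hO hB hJ hi).2.2

theorem Ioo_mem_fixedBy_wOJ {i : ℤ} (hi : i = n + 1 ∨ (i, -i) ∈ J) :
    Set.Ioo (-i) i ∈ fixedBy (Set ℤ) (wOJ n O J) := by
  rcases hi with rfl | hi
  · refine set_mem_fixedBy_of_movedBy_subset fun x hx => ?_
    rw [Set.mem_Ioo, ← abs_lt]
    by_contra! h
    refine hx ?_
    rw [mem_fixedBy, Perm.smul_def, wOJ, Perm.mul_apply,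
      wPerm_apply_of_lt_abs (inP_of_mem_MO hJ) (by omega),
      Perm.inv_eq_iff_eq, wPerm_apply_of_lt_abs (inP_of_subset_Pfin hO) (by omega)]
  · exact (wOJ_apply_and_mem_fixedBy hO hB hJ hi).2.1

end Bounds

end GelfandTsetlinC

open GelfandTsetlinC

theorem stmt15_general (n : ℕ) (O J : Finset (ℤ × ℤ)) (hO : O ⊆ Pfin n)
    (hB : ∀ p ∈ O, p.2 ≠ -p.1) (hJ : IsIdeal n J) :
    (∀ i : ℤ, ((i, -i) : ℤ × ℤ) ∈ J → wOJ n O J i = -i) ∧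
    (∀ i₁ i i₂ : ℤ, 1 ≤ i → i ≤ (n : ℤ) → i₁ < i → i < i₂ →
      (i₁ = 0 ∨ ((i₁, -i₁) : ℤ × ℤ) ∈ J) → (i₂ = (n : ℤ) + 1 ∨ ((i₂, -i₂) : ℤ × ℤ) ∈ J) →
      i₁ < |wOJ n O J i| ∧ |wOJ n O J i| < i₂) := by
  refine ⟨fun i hi => (wOJ_apply_and_mem_fixedBy hO hB hJ hi).1,
    fun i₁ i i₂ hi _ hi₁ hi₂ hD₁ hD₂ => ?_⟩
  have hlow := smul_mem_of_set_mem_fixedBy (Icc_mem_fixedBy_wOJ hO hB hJ hD₁) (x := i)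
  have hupp := smul_mem_of_set_mem_fixedBy (Ioo_mem_fixedBy_wOJ hO hB hJ hD₂) (x := i)
  simp only [Perm.smul_def, Set.mem_Icc, Set.mem_Ioo, ← abs_le, ← abs_lt,
    abs_of_pos (show 0 < i by omega)] at hlow hupp
  exact ⟨not_le.1 fun h => (hlow.1 h).not_gt hi₁, hupp.2 hi₂⟩

/-- Let `D = {i : (i,−i) ∈ J}`. Then `w^{O,J}(i) = −i` for `i ∈ D`, and for
`i₁ < i < i₂` with `i₁, i₂ ∈ D ∪ {0, n+1}` one has `i₁ < |w^{O,J}(i)| < i₂`. -/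
theorem stmt15 (n : ℕ) (O J : Finset (ℤ × ℤ)) (hA : Aset n ⊆ O) (hO : O ⊆ Pfin n)
    (hB : ∀ p ∈ O, p.2 ≠ -p.1) (hJ : IsIdeal n J) :
    (∀ i : ℤ, ((i, -i) : ℤ × ℤ) ∈ J → wOJ n O J i = -i) ∧
    (∀ i₁ i i₂ : ℤ, 1 ≤ i → i ≤ (n : ℤ) → i₁ < i → i < i₂ →
      (i₁ = 0 ∨ ((i₁, -i₁) : ℤ × ℤ) ∈ J) → (i₂ = (n : ℤ) + 1 ∨ ((i₂, -i₂) : ℤ × ℤ) ∈ J) →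
      i₁ < |wOJ n O J i| ∧ |wOJ n O J i| < i₂) :=
  stmt15_general n O J hO hB hJ

end
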